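/- arXiv:1301.5115 — 15 statements merged into one kernel-verified Lean document; each statement's English description precedes it below -/
import Mathlib

section
/- For any ultrafilter p on ℕ, any infinite word ω : ℕ → A over a finite alphabet A, and any two finite words u, v such that the set of occurrences of u in ω belongs to p, the set of occurrences of v in ω belongs to p, and |u| ≤ |v|, the word u is a prefix of v. -/
/-- The set of occurrences of the finite word `u` in the infinite word `x`. -/
def Occ {A : Type*} (x : ℕ → A) (u : List A) : Set ℕ :=
  {n | u = (List.range u.length).map fun i => x (n + i)}

theorem stmt_0 {A : Type*} [Fintype A] (p : Ultrafilter ℕ) (ω : ℕ → A)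
    (u v : List A) (hu : Occ ω u ∈ p) (hv : Occ ω v ∈ p)
    (hlen : u.length ≤ v.length) : u <+: v := by
  have h : (Occ ω u ∩ Occ ω v).Nonempty := by
    have := p.toFilter.inter_sets hu hv
    exact Filter.nonempty_of_mem this
  obtain ⟨n, hnu, hnv⟩ := h
  rw [Occ, Set.mem_setOf_eq] at hnu hnv
  have : u = v.take u.length := by
    rw [hnu, hnv]; simp [← List.map_take, List.take_range, hlen]
  rw [this]
  exact List.take_prefix _ _
end

section
/- For any ultrafilter p on ℕ and any infinite word ω : ℕ → A over a finite alphabet, there exists a unique infinite word p*(ω) such that for every finite word u, u is a prefix of p*(ω) if and only if the set of occurrences of u in ω belongs to p. -/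
/-- `u` is a prefix of the infinite word `x`. -/
def IsPref {A : Type*} (u : List A) (x : ℕ → A) : Prop :=
  u = (List.range u.length).map x

section Words

variable {A : Type*}

theorem isPref_iff_getElem {u : List A} {x : ℕ → A} :
    IsPref u x ↔ ∀ (i : ℕ) (hi : i < u.length), u[i] = x i := by
  simp [IsPref, List.ext_getElem_iff]

theorem occ_eq_iInter (x : ℕ → A) (u : List A) :
    Occ x u = ⋂ i : Fin u.length, (fun m => x (m + i)) ⁻¹' {u[i]} := by
  ext n
  simp [Occ, List.ext_getElem_iff, Fin.forall_iff, eq_comm]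

theorem eq_of_forall_isPref_iff {x y : ℕ → A} (h : ∀ u, IsPref u x ↔ IsPref u y) : x = y := by
  funext n
  have hpref := isPref_iff_getElem.mp ((h ((List.range (n + 1)).map x)).mp (by simp [IsPref]))
  simpa using hpref n (by simp)

namespace Ultrafilter

variable {α β : Type*}

/-- The value that a map into a finite type takes on a `p`-large set. -/
noncomputable def limOfFinite [Finite β] (p : Ultrafilter α) (f : α → β) : β :=
  (eq_pure_of_finite (p.map f)).choose

theorem preimage_singleton_mem_iff [Finite β] (p : Ultrafilter α) (f : α → β) {b : β} :
    f ⁻¹' {b} ∈ p ↔ b = p.limOfFinite f := by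
  rw [← mem_map, (eq_pure_of_finite (p.map f)).choose_spec, mem_pure, Set.mem_singleton_iff,
    eq_comm, limOfFinite]

/-- The word `p*(ω)`. -/
noncomputable def limWord [Finite A] (p : Ultrafilter ℕ) (ω : ℕ → A) : ℕ → A :=
  fun n => p.limOfFinite fun m => ω (m + n)

theorem isPref_limWord_iff [Finite A] (p : Ultrafilter ℕ) (ω : ℕ → A) (u : List A) :
    IsPref u (p.limWord ω) ↔ Occ ω u ∈ p := by
  rw [occ_eq_iInter, ← mem_coe, Filter.iInter_mem, isPref_iff_getElem]
  simp [preimage_singleton_mem_iff, limWord, Fin.forall_iff]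

end Ultrafilter

end Words

theorem stmt_1 {A : Type*} [Fintype A] (p : Ultrafilter ℕ) (ω : ℕ → A) :
    ∃! ν : ℕ → A, ∀ u : List A, IsPref u ν ↔ Occ ω u ∈ p :=
  ⟨p.limWord ω, p.isPref_limWord_iff ω, fun _ hν =>
    eq_of_forall_isPref_iff fun u => (hν u).trans (p.isPref_limWord_iff ω u).symm⟩
end

section
/- For every ultrafilter p on ℕ, every infinite word ω over a finite alphabet, and every finite word u, the set of occurrences of u in p*(ω) equals {m ∈ ℕ : (ω|_u − m) ∈ p}, where ω|_u − m = {n ∈ ℕ : n + m ∈ ω|_u}. -/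
theorem stmt_2 {A : Type*} [Fintype A] (p : Ultrafilter ℕ) (ω ν : ℕ → A)
    (hν : ∀ u : List A, IsPref u ν ↔ Occ ω u ∈ p) (u : List A) :
    Occ ν u = {m | {n | n + m ∈ Occ ω u} ∈ p} := by
  ext m
  set L := m + u.length with hL
  set w : List A := (List.range L).map ν with hwdef
  have hwlen : w.length = L := by simp [hwdef]
  have hwp : IsPref w ν := by rw [IsPref, hwlen]
  have hOw : Occ ω w ∈ p := (hν w).mp hwp
  have key : ∀ n ∈ Occ ω w, (m ∈ Occ ν u ↔ n + m ∈ Occ ω u) := by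
    intro n hn
    have hmap : ∀ i ∈ List.range L, ν i = ω (n + i) := by
      have h := hn
      rw [Occ, Set.mem_setOf_eq, hwlen, hwdef] at h
      exact fun i hi => List.map_eq_map_iff.mp h i hi
    have heq : ((List.range u.length).map fun i => ν (m + i)) =
        (List.range u.length).map fun i => ω (n + m + i) := by
      apply List.map_congr_left
      intro i hi
      rw [List.mem_range] at hi
      have : ν (m + i) = ω (n + (m + i)) :=
        hmap (m + i) (List.mem_range.mpr (by omega))
      rw [this, add_assoc]
    simp only [Occ, Set.mem_setOf_eq, heq]
  constructor
  · intro hm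
    exact Filter.mem_of_superset hOw fun n hn => (key n hn).mp hm
  · intro hm
    obtain ⟨n, hn1, hn2⟩ := Ultrafilter.nonempty_of_mem (Filter.inter_mem hOw hm)
    exact (key n hn1).mpr hn2
end

section
/- For any ultrafilters p, q on ℕ and any infinite word ω over a finite alphabet, (p + q)*(ω) = q*(p*(ω)). In particular, if p is an idempotent ultrafilter (p + p = p), then p*(p*(ω)) = p*(ω). -/
/-- Addition of ultrafilters on ℕ: `A ∈ p + q ↔ {n | A - n ∈ p} ∈ q`. -/
noncomputable def uAdd (p q : Ultrafilter ℕ) : Ultrafilter ℕ :=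
  q.bind fun n => p.map fun m => m + n

lemma eq_map_range {A : Type*} (u : List A) (f : ℕ → A) :
    u = (List.range u.length).map f ↔ ∀ i (h : i < u.length), u[i] = f i := by
  constructor
  · intro h i hi
    rw [List.getElem_of_eq h]
    simp
  · intro h
    apply List.ext_getElem
    · simp
    · intro i h1 h2
      simp [h i h1]

lemma isPref_pref {A : Type*} (x : ℕ → A) (k : ℕ) :
    IsPref ((List.range k).map x) x := by
  unfold IsPref
  rw [eq_map_range]
  intro i hi
  simp

lemma mem_occ {A : Type*} (x : ℕ → A) (u : List A) (n : ℕ) :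
    n ∈ Occ x u ↔ ∀ i (h : i < u.length), u[i] = x (n + i) :=
  eq_map_range u _

lemma isPref_iff {A : Type*} (u : List A) (x : ℕ → A) :
    IsPref u x ↔ ∀ i (h : i < u.length), u[i] = x i :=
  eq_map_range u x

lemma occ_shift {A : Type*} (p : Ultrafilter ℕ) (ω ν : ℕ → A)
    (hν : ∀ u : List A, IsPref u ν ↔ Occ ω u ∈ p) (u : List A) (n : ℕ) :
    n ∈ Occ ν u ↔ {m | m + n ∈ Occ ω u} ∈ p := by
  have key : ∀ v : List A, n ∈ Occ ν v → {m | m + n ∈ Occ ω v} ∈ p := by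
    intro v hv
    set w : List A := (List.range (n + v.length)).map ν with hw
    have hwp : Occ ω w ∈ p := (hν w).mp (isPref_pref ν _)
    have hwl : w.length = n + v.length := by simp [hw]
    refine p.toFilter.sets_of_superset hwp ?_
    intro m hm
    rw [mem_occ] at hm hv
    show m + n ∈ Occ ω v
    rw [mem_occ]
    intro i hi
    have h2 : n + i < w.length := by omega
    have h3 : w[n+i] = ω (m + (n + i)) := hm (n+i) h2
    have h4 : w[n+i]'h2 = ν (n + i) := by simp [hw]
    rw [hv i hi, ← h4, h3]
    ring_nf
  constructor
  · exact key u
  · intro hS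
    set u' : List A := (List.range u.length).map (fun i => ν (n + i)) with hu'
    have hlen : u'.length = u.length := by simp [hu']
    have hn' : n ∈ Occ ν u' := by
      rw [mem_occ]
      intro i hi
      rw [hlen] at hi
      simp [hu']
    have hS' := key u' hn'
    obtain ⟨m, hm1, hm2⟩ := Filter.nonempty_of_mem (Filter.inter_mem hS hS')
    have huu : u = u' := by
      apply List.ext_getElem (by omega)
      intro i h1 h2
      rw [(mem_occ ω u (m+n)).mp hm1 i h1,
        (mem_occ ω u' (m+n)).mp hm2 i (by omega)]
    rw [huu]
    exact hn'

theorem stmt_3 {A : Type*} [Fintype A] (p q : Ultrafilter ℕ) (ω ν μ : ℕ → A)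
    (hν : ∀ u : List A, IsPref u ν ↔ Occ ω u ∈ p)
    (hμ : ∀ u : List A, IsPref u μ ↔ Occ ν u ∈ q) :
    (∀ u : List A, IsPref u μ ↔ Occ ω u ∈ uAdd p q) ∧
      (uAdd p p = p → q = p → μ = ν) := by
  have H : ∀ u : List A, IsPref u μ ↔ Occ ω u ∈ uAdd p q := by
    intro u
    rw [hμ u]
    have hocc : Occ ν u = {n | {m | m + n ∈ Occ ω u} ∈ p} :=
      Set.ext (occ_shift p ω ν hν u)
    rw [hocc]
    constructor
    · intro h
      exact h
    · intro h
      exact h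
  refine ⟨H, ?_⟩
  intro h1 h2
  subst h2
  funext n
  set w : List A := (List.range (n+1)).map μ with hw
  have hwμ : IsPref w μ := isPref_pref μ (n+1)
  have hwo := (H w).mp hwμ
  rw [h1] at hwo
  have hwν : IsPref w ν := (hν w).mpr hwo
  have hwl : w.length = n + 1 := by simp [hw]
  have h5 : n < w.length := by omega
  have e1 : w[n]'h5 = μ n := (isPref_iff w μ).mp hwμ n h5
  have e2 : w[n]'h5 = ν n := (isPref_iff w ν).mp hwν n h5
  rw [← e1, e2]
end

section
/- For every ultrafilter p on ℕ and every infinite word ω over a finite alphabet, p*(T(ω)) = T(p*(ω)), where T is the shift map T(ω)_n = ω_{n+1}. -/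
theorem stmt_4 {A : Type*} [Fintype A] (p : Ultrafilter ℕ) (ω ν μ : ℕ → A)
    (hν : ∀ u : List A, IsPref u ν ↔ Occ ω u ∈ p)
    (hμ : ∀ u : List A, IsPref u μ ↔ Occ (fun n => ω (n + 1)) u ∈ p) :
    μ = fun n => ν (n + 1) := by
  funext n
  set u : List A := (List.range (n + 2)).map ν with hu
  have hlenu : u.length = n + 2 := by simp [hu]
  have hpref : IsPref u ν := by
    unfold IsPref; rw [hlenu]
  have h1 : Occ ω u ∈ p := (hν u).1 hpref
  set v : List A := (List.range (n + 1)).map (fun i => ν (i + 1)) with hv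
  have hlenv : v.length = n + 1 := by simp [hv]
  have hsub : Occ ω u ⊆ Occ (fun n => ω (n + 1)) v := by
    intro m hm
    have hm' : u = (List.range (n + 2)).map fun i => ω (m + i) := by
      rw [← hlenu]; exact hm
    have hpt : ∀ i < n + 2, ν i = ω (m + i) := by
      intro i hi
      have := congrArg (fun l => l[i]?) (hu.symm.trans hm')
      simpa [List.getElem?_map, List.getElem?_range hi] using this
    show v = (List.range v.length).map fun i => ω (m + i + 1)
    rw [hlenv, hv]
    refine List.map_congr_left ?_
    intro i hi
    have hi' : i + 1 < n + 2 := by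
      simpa using Nat.succ_lt_succ (List.mem_range.mp hi)
    simpa [Nat.add_assoc] using hpt (i + 1) hi'
  have h2 : Occ (fun n => ω (n + 1)) v ∈ p := p.sets_of_superset h1 hsub
  have hprefv : IsPref v μ := (hμ v).2 h2
  have : v = (List.range (n + 1)).map μ := by
    have := hprefv; unfold IsPref at this; rwa [hlenv] at this
  have := congrArg (fun l => l[n]?) (hv.symm.trans this)
  simpa [List.getElem?_map, List.getElem?_range (Nat.lt_succ_self n)] using this.symm
end

section
/- Let ω and ν be infinite words over a finite alphabet such that every prefix of ν is a factor of ω. Then there exists an ultrafilter p on ℕ such that p*(ω) = ν. -/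
/-- `u` is a factor of the infinite word `x`. -/
def IsFactor {A : Type*} (u : List A) (x : ℕ → A) : Prop :=
  ∃ n, n ∈ Occ x u

lemma occ_pref_mono {A : Type*} (ω ν : ℕ → A) {m n : ℕ} (hmn : m ≤ n) :
    Occ ω ((List.range n).map ν) ⊆ Occ ω ((List.range m).map ν) := by
  intro k hk
  simp only [Occ, Set.mem_setOf_eq, List.length_map, List.length_range,
    List.map_eq_map_iff, List.mem_range] at hk ⊢
  exact fun i hi => hk i (lt_of_lt_of_le hi hmn)

theorem stmt_5 {A : Type*} [Fintype A] (ω ν : ℕ → A)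
    (h : ∀ u : List A, IsPref u ν → IsFactor u ω) :
    ∃ p : Ultrafilter ℕ, ∀ u : List A, IsPref u ν ↔ Occ ω u ∈ p := by
  set F : Filter ℕ := ⨅ n : ℕ, Filter.principal (Occ ω ((List.range n).map ν)) with hF
  have hdir : Directed (· ≥ ·) fun n : ℕ => Filter.principal (Occ ω ((List.range n).map ν)) := by
    intro m n
    exact ⟨max m n, Filter.principal_mono.2 (occ_pref_mono ω ν (le_max_left _ _)),
      Filter.principal_mono.2 (occ_pref_mono ω ν (le_max_right _ _))⟩
  have hne : F.NeBot := by
    rw [hF, Filter.iInf_neBot_iff_of_directed hdir]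
    intro n
    rw [Filter.principal_neBot_iff]
    exact h _ (by simp [IsPref])
  refine ⟨Ultrafilter.of F, fun u => ?_⟩
  have hmem : ∀ n : ℕ, Occ ω ((List.range n).map ν) ∈ Ultrafilter.of F := fun n =>
    Ultrafilter.of_le F (Filter.mem_iInf_of_mem n (Filter.mem_principal_self _))
  constructor
  · intro hu
    rw [hu]
    simpa using hmem u.length
  · intro hu
    have h2 := hmem u.length
    have h3 : (Occ ω u ∩ Occ ω ((List.range u.length).map ν)).Nonempty :=
      Ultrafilter.nonempty_of_mem (Filter.inter_mem hu h2)
    obtain ⟨k, hk1, hk2⟩ := h3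
    simp only [Occ, Set.mem_setOf_eq, List.length_map, List.length_range] at hk1 hk2
    exact hk1.trans hk2.symm
end

section
/- Let ω be an infinite word over a finite alphabet and u a finite word. Then ω|_u is an IP-set if and only if u is a prefix of p*(ω) for some idempotent ultrafilter p on ℕ. -/
/-- `S` is an IP-set: it contains all finite sums of distinct terms of some
strictly increasing sequence of natural numbers. -/
def IPSet (S : Set ℕ) : Prop :=
  ∃ x : ℕ → ℕ, StrictMono x ∧
    ∀ F : Finset ℕ, F.Nonempty → (∑ n ∈ F, x n) ∈ S

/-!
By Hindman's theorem a set lies in some idempotent ultrafilter iff it contains all finite sums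
`FS a` of some sequence `a`. For a positive sequence, grouping `a` into consecutive blocks, each
longer than the sum of everything before it, turns `FS a ⊆ S` into the strictly increasing form of
an IP-set; positivity also rules out principal ultrafilters, since `pure m + pure m = pure (2m)`.
On the word side, `i ↦ ω (n + i)` takes values in a finite alphabet, so each letter of `p*(ω)` is a
`p`-limit, and `ω|_v ∈ p` is the intersection of the finitely many sets where the letters of `v`
are attained.
-/

open Hindman Filter Finset

attribute [local instance] Ultrafilter.add

section Blocks

/-- Each block is longer than the total of all earlier terms, so for a positive sequence the
block sums strictly increase. -/
def blockBound (a : ℕ → ℕ) : ℕ → ℕ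
  | 0 => 0
  | n + 1 => blockBound a n + ∑ i ∈ range (blockBound a n), a i + 1

def block (a : ℕ → ℕ) (n : ℕ) : Finset ℕ := Ico (blockBound a n) (blockBound a (n + 1))

variable {a : ℕ → ℕ}

lemma strictMono_blockBound : StrictMono (blockBound a) :=
  strictMono_nat_of_lt_succ fun n => by simp only [blockBound]; omega

lemma block_nonempty (n : ℕ) : (block a n).Nonempty :=
  nonempty_Ico.2 (strictMono_blockBound (Nat.lt_succ_self n))

lemma pairwiseDisjoint_block (F : Finset ℕ) : (F : Set ℕ).PairwiseDisjoint (block a) := by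
  intro n _ m _ hnm
  rw [Function.onFun, ← Finset.disjoint_coe]
  simpa only [block, coe_Ico, Function.onFun, Order.succ_eq_add_one] using
    strictMono_blockBound.monotone.pairwise_disjoint_on_Ico_succ hnm

lemma strictMono_sum_block (ha : ∀ i, 0 < a i) : StrictMono fun n => ∑ i ∈ block a n, a i := by
  refine strictMono_nat_of_lt_succ fun n => ?_
  calc ∑ i ∈ block a n, a i ≤ ∑ i ∈ range (blockBound a (n + 1)), a i :=
        sum_le_sum_of_subset fun i hi => mem_range.2 (mem_Ico.1 hi).2
    _ < #(block a (n + 1)) := by simp only [block, Nat.card_Ico, blockBound]; omega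
    _ = ∑ _i ∈ block a (n + 1), 1 := card_eq_sum_ones _
    _ ≤ ∑ i ∈ block a (n + 1), a i := sum_le_sum fun i _ => ha i

end Blocks

lemma exists_finset_of_mem_FS {a : Stream' ℕ} {m : ℕ} (hm : m ∈ FS a) :
    ∃ F : Finset ℕ, F.Nonempty ∧ m = ∑ i ∈ F, a.get i := by
  induction hm with
  | head' a => exact ⟨{0}, singleton_nonempty 0, by simp [Stream'.head]⟩
  | tail' a m _ ih =>
    obtain ⟨F, hF, rfl⟩ := ih
    exact ⟨F.map (addRightEmbedding 1), hF.map, by simp [Stream'.get_tail]⟩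
  | cons' a m _ ih =>
    obtain ⟨F, hF, rfl⟩ := ih
    refine ⟨insert 0 (F.map (addRightEmbedding 1)), insert_nonempty _ _, ?_⟩
    rw [sum_insert (by simp)]
    simp [Stream'.get_tail, Stream'.head]

lemma pos_of_mem_FS {a : Stream' ℕ} (ha : ∀ i, 0 < a.get i) {m : ℕ} (hm : m ∈ FS a) : 0 < m := by
  obtain ⟨F, hF, rfl⟩ := exists_finset_of_mem_FS hm
  exact sum_pos (fun i _ => ha i) hF

lemma IPSet.exists_FS_subset {S : Set ℕ} (hS : IPSet S) :
    ∃ a : Stream' ℕ, (∀ i, 0 < a.get i) ∧ FS a ⊆ S := by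
  obtain ⟨x, hx, hsum⟩ := hS
  -- `x 0` may vanish, so drop it.
  refine ⟨fun n => x (n + 1), fun i => (Nat.zero_le _).trans_lt (hx i.succ_pos), fun m hm => ?_⟩
  obtain ⟨F, hF, rfl⟩ := exists_finset_of_mem_FS hm
  simpa [Stream'.get] using hsum (F.map (addRightEmbedding 1)) hF.map

lemma IPSet.of_FS_subset {a : Stream' ℕ} (ha : ∀ i, 0 < a.get i) {S : Set ℕ} (hS : FS a ⊆ S) :
    IPSet S := by
  refine ⟨fun n => ∑ i ∈ block a.get n, a.get i, strictMono_sum_block ha, fun F hF => hS ?_⟩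
  rw [← sum_biUnion (pairwiseDisjoint_block F)]
  exact FS.finsetSum a _ (hF.biUnion fun n _ => block_nonempty n)

lemma uAdd_eq_add (p q : Ultrafilter ℕ) : uAdd p q = q + p := by
  ext S
  have hbind : S ∈ uAdd p q ↔ {n | {m | m + n ∈ S} ∈ p} ∈ q := Iff.rfl
  have hadd := Ultrafilter.eventually_add q p (· ∈ S)
  simp only [Filter.Eventually, Ultrafilter.mem_coe, Set.ofPred_mem_eq] at hadd
  simp only [hbind, hadd, add_comm]

lemma ne_pure_of_FS_mem {a : Stream' ℕ} (ha : ∀ i, 0 < a.get i) {p : Ultrafilter ℕ}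
    (hp : p + p = p) (hFS : FS a ∈ p) (m : ℕ) : p ≠ pure m := by
  rintro rfl
  have hmm : m + m = m := by
    simpa [hp] using Ultrafilter.eventually_add (pure m) (pure m) (· = m)
  have := pos_of_mem_FS ha (Ultrafilter.mem_pure.1 hFS)
  omega

theorem ipSet_iff_exists_idempotent {S : Set ℕ} :
    IPSet S ↔ ∃ p : Ultrafilter ℕ, uAdd p p = p ∧ (∀ m, p ≠ pure m) ∧ S ∈ p := by
  simp only [uAdd_eq_add]
  constructor
  · intro hS
    obtain ⟨a, ha, haS⟩ := hS.exists_FS_subset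
    obtain ⟨p, hp, hFS⟩ := exists_idempotent_ultrafilter_le_FS a
    exact ⟨p, hp, ne_pure_of_FS_mem ha hp hFS, mem_of_superset hFS haS⟩
  · rintro ⟨p, hp, hnp, hS⟩
    have hpos : {n | 0 < n} ∈ p := by
      have : ({0} : Set ℕ) ∉ p := fun h => by
        obtain ⟨_, rfl, hp0⟩ := Ultrafilter.eq_pure_of_finite_mem (Set.finite_singleton 0) h
        exact hnp 0 hp0
      simpa [← Ultrafilter.compl_mem_iff_notMem, Nat.pos_iff_ne_zero, Set.compl_def] using this
    obtain ⟨a, ha⟩ := exists_FS_of_large p hp _ (inter_mem hS hpos)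
    exact .of_FS_subset (fun i => (ha (FS.singleton a i)).2) fun m hm => (ha hm).1

section Words

variable {A : Type*}

lemma list_eq_map_range_iff {v : List A} {f : ℕ → A} :
    v = (List.range v.length).map f ↔ ∀ i : Fin v.length, v.get i = f i := by
  refine ⟨fun h i => ?_, fun h => List.ext_get (by simp) fun i hi _ => by simp [← h ⟨i, hi⟩]⟩
  rw [List.get_of_eq h]
  simp

lemma occ_eq_iInter_s6 (ω : ℕ → A) (v : List A) :
    Occ ω v = ⋂ i : Fin v.length, {n | ω (n + i) = v.get i} := by
  ext n
  simp only [Occ, Set.mem_ofPred_eq, list_eq_map_range_iff, Set.mem_iInter, eq_comm]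

variable [Finite A]

/-- The word `p*(ω)`: its `i`-th letter is the `p`-limit of `n ↦ ω (n + i)`. -/
noncomputable def limitWord (p : Ultrafilter ℕ) (ω : ℕ → A) (i : ℕ) : A :=
  (Ultrafilter.eq_pure_of_finite (p.map fun n => ω (n + i))).choose

lemma limitWord_eq_iff (p : Ultrafilter ℕ) (ω : ℕ → A) (i : ℕ) (b : A) :
    limitWord p ω i = b ↔ {n | ω (n + i) = b} ∈ p := by
  have hpure : p.map (fun n => ω (n + i)) = pure (limitWord p ω i) :=
    (Ultrafilter.eq_pure_of_finite _).choose_spec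
  have hmap : ({b} : Set A) ∈ p.map (fun n => ω (n + i)) ↔ {n | ω (n + i) = b} ∈ p := Iff.rfl
  rw [← hmap, hpure, Ultrafilter.mem_pure, Set.mem_singleton_iff]

lemma isPref_limitWord_iff (p : Ultrafilter ℕ) (ω : ℕ → A) (v : List A) :
    IsPref v (limitWord p ω) ↔ Occ ω v ∈ p := by
  rw [IsPref, list_eq_map_range_iff, occ_eq_iInter_s6, ← Ultrafilter.mem_coe, Filter.iInter_mem]
  exact forall_congr' fun i => by rw [eq_comm, limitWord_eq_iff, Ultrafilter.mem_coe]

end Words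

theorem stmt_6 {A : Type*} [Fintype A] (ω : ℕ → A) (u : List A) :
    IPSet (Occ ω u) ↔
      ∃ p : Ultrafilter ℕ, uAdd p p = p ∧ (∀ m : ℕ, p ≠ pure m) ∧
        ∃ ν : ℕ → A, (∀ v : List A, IsPref v ν ↔ Occ ω v ∈ p) ∧ IsPref u ν := by
  rw [ipSet_iff_exists_idempotent]
  refine exists_congr fun p => and_congr_right fun _ => and_congr_right fun _ => ⟨fun hu => ?_, ?_⟩
  · exact ⟨limitWord p ω, isPref_limitWord_iff p ω, (isPref_limitWord_iff p ω u).2 hu⟩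
  · rintro ⟨ν, hν, hu⟩
    exact (hν u).1 hu
end

section
/- Let ω be a uniformly recurrent infinite word over a finite alphabet and p an idempotent ultrafilter on ℕ. Then ω and p*(ω) are proximal, i.e., for every N there exists n such that ω_n ω_{n+1} … ω_{n+N} = ν_n ν_{n+1} … ν_{n+N} where ν = p*(ω). -/
/-- `x` is uniformly recurrent: every factor occurs syndetically. -/
def UnifRec {A : Type*} (x : ℕ → A) : Prop :=
  ∀ u : List A, IsFactor u x →
    ∃ B : ℕ, ∀ n : ℕ, ∃ m, n ≤ m ∧ m ≤ n + B ∧ m ∈ Occ x u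

lemma occ_get {A : Type*} (x : ℕ → A) (u : List A) {n : ℕ} (h : n ∈ Occ x u)
    {i : ℕ} (hi : i < u.length) : u[i] = x (n + i) := by
  have h' : u = (List.range u.length).map fun i => x (n + i) := h
  rw [List.getElem_of_eq h' hi]
  simp

lemma mem_uAdd {p q : Ultrafilter ℕ} {s : Set ℕ} :
    s ∈ uAdd p q ↔ {n | {m | m + n ∈ s} ∈ p} ∈ q := by
  exact Filter.mem_bind'

theorem stmt_7 {A : Type*} [Fintype A] (ω ν : ℕ → A) (hur : UnifRec ω)
    (p : Ultrafilter ℕ) (hp : uAdd p p = p)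
    (hν : ∀ u : List A, IsPref u ν ↔ Occ ω u ∈ p) :
    ∀ N : ℕ, ∃ n : ℕ, ∀ i ≤ N, ω (n + i) = ν (n + i) := by
  -- every prefix of ν is in p both as occurrences in ω and in ν
  have hpref : ∀ L : ℕ, IsPref ((List.range L).map ν) ν := by
    intro L
    unfold IsPref
    simp
  have key : ∀ L : ℕ, Occ ν ((List.range L).map ν) ∈ p := by
    intro L
    set v : List A := (List.range L).map ν with hv
    have hvlen : v.length = L := by simp [hv]
    have hvp : Occ ω v ∈ p := (hν v).1 (hpref L)
    have hvp' : Occ ω v ∈ uAdd p p := by rw [hp]; exact hvp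
    rw [mem_uAdd] at hvp'
    -- show the set in p is a subset of Occ ν v
    refine p.toFilter.mem_of_superset hvp' ?_
    intro n hn
    -- hn : {m | m + n ∈ Occ ω v} ∈ p
    -- take the prefix of ν of length n + L
    set u : List A := (List.range (n + L)).map ν with hu
    have hulen : u.length = n + L := by simp [hu]
    have hup : Occ ω u ∈ p := (hν u).1 (hpref (n + L))
    have hne : (Occ ω u ∩ {m | m + n ∈ Occ ω v}).Nonempty :=
      Filter.nonempty_of_mem (Filter.inter_mem hup hn)
    obtain ⟨m, hm1, hm2⟩ := hne
    -- n ∈ Occ ν v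
    show v = (List.range v.length).map fun i => ν (n + i)
    apply List.ext_getElem
    · simp
    intro i hi hi'
    have hiL : i < L := by rwa [hvlen] at hi
    have e1 : v[i] = ω (m + n + i) := occ_get ω v hm2 hi
    have e2 : u[n + i]'(by omega) = ω (m + (n + i)) := occ_get ω u hm1 (by omega)
    have e3 : u[n + i]'(by omega) = ν (n + i) := by simp [hu]
    have e4 : v[i] = ν (n + i) := by
      rw [e1]
      rw [show m + n + i = m + (n + i) by ring] at *
      rw [← e2, e3]
    rw [e4]
    simp
  intro N
  set v : List A := (List.range (N + 1)).map ν with hv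
  have h1 : Occ ω v ∈ p := (hν v).1 (hpref (N + 1))
  have h2 : Occ ν v ∈ p := key (N + 1)
  obtain ⟨n, hn1, hn2⟩ := Filter.nonempty_of_mem (Filter.inter_mem h1 h2)
  refine ⟨n, fun i hi => ?_⟩
  have hi' : i < v.length := by simp [hv]; omega
  have e1 := occ_get ω v hn1 hi'
  have e2 := occ_get ν v hn2 hi'
  rw [← e1]; exact e2
end

section
/- Let F_0 = 1, F_1 = 2, F_{n+2} = F_{n+1} + F_n be the Fibonacci numbers and let f be the Fibonacci word, the fixed point of the substitution 0 ↦ 01, 1 ↦ 0. For every nonempty finite set A ⊆ ℕ, the sum Σ_{n ∈ A} F_{2n+1} is a position at which f has the letter 0. Consequently, the set f|_0 = {n : f_n = 0} is an IP-set. -/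
/-- The Fibonacci substitution 0 ↦ 01, 1 ↦ 0. -/
def σfib : ℕ → List ℕ := fun a => if a = 0 then [0, 1] else [0]

def fibWord : ℕ → List ℕ
  | 0 => [0]
  | k + 1 => (fibWord k).flatMap σfib

lemma fibWord_add_two (k : ℕ) : fibWord (k + 2) = fibWord (k + 1) ++ fibWord k := by
  induction k with
  | zero => rfl
  | succ k ih =>
    change (fibWord (k + 2)).flatMap σfib = fibWord (k + 2) ++ fibWord (k + 1)
    conv_lhs => rw [ih]
    rw [List.flatMap_append]
    rfl

lemma IsPref.getElem_eq {A : Type*} {u : List A} {x : ℕ → A} (h : IsPref u x) {i : ℕ}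
    (hi : i < u.length) : u[i] = x i := by
  simpa using List.getElem_of_eq h hi

lemma isPref_fibWord {f : ℕ → ℕ} (hf0 : f 0 = 0)
    (hfix : ∀ n : ℕ, IsPref (((List.range n).map f).flatMap σfib) f) (k : ℕ) :
    IsPref (fibWord k) f := by
  induction k with
  | zero => simp [IsPref, fibWord, hf0]
  | succ k ih =>
    have h : fibWord (k + 1) = ((List.range (fibWord k).length).map f).flatMap σfib := by
      change (fibWord k).flatMap σfib = _
      rw [← ih]
    rw [h]
    exact hfix _

lemma length_fibWord {F : ℕ → ℕ} (hF0 : F 0 = 1) (hF1 : F 1 = 2)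
    (hF : ∀ n, F (n + 2) = F (n + 1) + F n) (k : ℕ) : (fibWord k).length = F k := by
  induction k using Nat.twoStepInduction with
  | zero => simp [fibWord, hF0]
  | one => simp [fibWord, σfib, hF1]
  | more k ih₀ ih₁ => rw [fibWord_add_two, List.length_append, hF, ih₀, ih₁]

lemma pos_of_recurrence {F : ℕ → ℕ} (h0 : 0 < F 0) (h1 : 0 < F 1)
    (hF : ∀ n, F (n + 2) = F (n + 1) + F n) (n : ℕ) : 0 < F n := by
  induction n using Nat.twoStepInduction with
  | zero => exact h0
  | one => exact h1
  | more k _ ih₁ => rw [hF]; omega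

lemma sum_range_odd_add_of_recurrence {F : ℕ → ℕ} (hF : ∀ n, F (n + 2) = F (n + 1) + F n)
    (k : ℕ) : ∑ j ∈ Finset.range k, F (2 * j + 1) + F 0 = F (2 * k) := by
  induction k with
  | zero => simp
  | succ k ih =>
    rw [Finset.sum_range_succ, show 2 * (k + 1) = 2 * k + 2 by ring, hF]
    omega

lemma strictMono_odd_of_recurrence {F : ℕ → ℕ} (hpos : ∀ n, 0 < F n)
    (hF : ∀ n, F (n + 2) = F (n + 1) + F n) : StrictMono fun n => F (2 * n + 1) :=
  strictMono_nat_of_lt_succ fun n => by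
    rw [show 2 * (n + 1) + 1 = 2 * n + 1 + 2 by ring, hF, show 2 * n + 1 + 1 = 2 * n + 2 by ring]
    have := hpos (2 * n + 2)
    omega

lemma apply_add_eq_apply_of_lt {f : ℕ → ℕ} (hf0 : f 0 = 0)
    (hfix : ∀ n : ℕ, IsPref (((List.range n).map f).flatMap σfib) f)
    {F : ℕ → ℕ} (hF0 : F 0 = 1) (hF1 : F 1 = 2) (hF : ∀ n, F (n + 2) = F (n + 1) + F n)
    {n m : ℕ} (hm : m < F n) : f (F (n + 1) + m) = f m := by
  have hlen := length_fibWord hF0 hF1 hF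
  have hi : F (n + 1) + m < (fibWord (n + 2)).length := by rw [hlen, hF]; omega
  have him : m < (fibWord n).length := hlen n ▸ hm
  rw [← (isPref_fibWord hf0 hfix (n + 2)).getElem_eq hi, ← (isPref_fibWord hf0 hfix n).getElem_eq him,
    List.getElem_of_eq (fibWord_add_two n) hi, List.getElem_append_right (by rw [hlen]; omega)]
  simp only [hlen, Nat.add_sub_cancel_left]

lemma apply_sum_odd_eq_zero {f : ℕ → ℕ} (hf0 : f 0 = 0)
    (hfix : ∀ n : ℕ, IsPref (((List.range n).map f).flatMap σfib) f)
    {F : ℕ → ℕ} (hF0 : F 0 = 1) (hF1 : F 1 = 2) (hF : ∀ n, F (n + 2) = F (n + 1) + F n)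
    (A : Finset ℕ) : f (∑ n ∈ A, F (2 * n + 1)) = 0 := by
  induction A using Finset.induction_on_max with
  | empty => simpa using hf0
  | insert a s hs ih =>
    have hrest : ∑ n ∈ s, F (2 * n + 1) < F (2 * a) := by
      have hsub : ∑ n ∈ s, F (2 * n + 1) ≤ ∑ j ∈ Finset.range a, F (2 * j + 1) :=
        Finset.sum_le_sum_of_subset fun x hx => Finset.mem_range.2 (hs x hx)
      have := sum_range_odd_add_of_recurrence hF a
      omega
    rw [Finset.sum_insert fun h => lt_irrefl a (hs a h),
      apply_add_eq_apply_of_lt hf0 hfix hF0 hF1 hF hrest, ih]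

theorem stmt_8 (f : ℕ → ℕ) (hf0 : f 0 = 0)
    (hfix : ∀ n : ℕ, IsPref (((List.range n).map f).flatMap σfib) f)
    (F : ℕ → ℕ) (hF0 : F 0 = 1) (hF1 : F 1 = 2)
    (hF : ∀ n, F (n + 2) = F (n + 1) + F n) :
    (∀ A : Finset ℕ, A.Nonempty → f (∑ n ∈ A, F (2 * n + 1)) = 0) ∧
      IPSet {n | f n = 0} := by
  have hsum (A : Finset ℕ) := apply_sum_odd_eq_zero hf0 hfix hF0 hF1 hF A
  have hpos := pos_of_recurrence (by omega) (by omega) hF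
  exact ⟨fun A _ => hsum A, _, strictMono_odd_of_recurrence hpos hF, fun A _ => hsum A⟩
end

section
/- Let α = (3 − √5)/2 and let α' satisfy (1 − α)/3 ≤ α' ≤ (1 − α)/2. If n₁, n₂, n₃ ∈ ℕ are such that the fractional parts {(nᵢ + 1)α} all lie in the interval [1 − α, 1 − α'), then the fractional part {(n₁ + n₂ + n₃ + 1)α} lies in [0, 1 − α). -/
/-- The slope α = (3 − √5)/2 associated with the Fibonacci word. -/
noncomputable def alphaFib : ℝ := (3 - Real.sqrt 5) / 2

lemma alphaFib_pos : 0 < alphaFib := by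
  have h : Real.sqrt 5 < 3 := by
    nlinarith [Real.sq_sqrt (by norm_num : (5:ℝ) ≥ 0), Real.sqrt_nonneg 5]
  unfold alphaFib; linarith

lemma alphaFib_lt : alphaFib ≤ 2/5 := by
  have h : (2.2:ℝ) ≤ Real.sqrt 5 := by
    nlinarith [Real.sq_sqrt (by norm_num : (5:ℝ) ≥ 0), Real.sqrt_nonneg 5]
  unfold alphaFib; linarith

theorem stmt_10 (α' : ℝ)
    (hlo : (1 - alphaFib) / 3 ≤ α') (hhi : α' ≤ (1 - alphaFib) / 2)
    (n₁ n₂ n₃ : ℕ)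
    (h₁ : Int.fract (((n₁ : ℝ) + 1) * alphaFib) ∈ Set.Ico (1 - alphaFib) (1 - α'))
    (h₂ : Int.fract (((n₂ : ℝ) + 1) * alphaFib) ∈ Set.Ico (1 - alphaFib) (1 - α'))
    (h₃ : Int.fract (((n₃ : ℝ) + 1) * alphaFib) ∈ Set.Ico (1 - alphaFib) (1 - α')) :
    Int.fract (((n₁ : ℝ) + (n₂ : ℝ) + (n₃ : ℝ) + 1) * alphaFib) ∈
      Set.Ico (0 : ℝ) (1 - alphaFib) := by
  obtain ⟨l₁, u₁⟩ := h₁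
  obtain ⟨l₂, u₂⟩ := h₂
  obtain ⟨l₃, u₃⟩ := h₃
  set α := alphaFib
  set x₁ := Int.fract (((n₁ : ℝ) + 1) * α) with hx₁
  set x₂ := Int.fract (((n₂ : ℝ) + 1) * α) with hx₂
  set x₃ := Int.fract (((n₃ : ℝ) + 1) * α) with hx₃
  have hpos := alphaFib_pos
  have hlt := alphaFib_lt
  set S : ℝ := x₁ + x₂ + x₃ - 2 * α with hS
  have hS1 : 1 ≤ S := by
    have : 3 * (1 - α) - 2 * α ≥ 1 := by simp only [α]; linarith
    linarith
  have hS2 : S < 2 - α := by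
    have : 3 * (1 - α') - 2 * α ≤ 2 - α := by simp only [α]; linarith
    linarith
  have key : (((n₁ : ℝ) + (n₂ : ℝ) + (n₃ : ℝ) + 1) * α) =
      S + ((⌊((n₁ : ℝ) + 1) * α⌋ + ⌊((n₂ : ℝ) + 1) * α⌋ + ⌊((n₃ : ℝ) + 1) * α⌋ : ℤ) : ℝ) := by
    simp only [hS, hx₁, hx₂, hx₃, Int.fract]
    push_cast
    ring
  rw [key, Int.fract_add_intCast]
  have : Int.fract S = Int.fract (S - 1) := by
    rw [show S - 1 = S - (1:ℤ) by push_cast; ring, Int.fract_sub_intCast]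
  rw [this, Int.fract_eq_self.mpr ⟨by linarith, by linarith⟩]
  exact ⟨by linarith, by linarith⟩
end

section
/- Let α = (3 − √5)/2 and let α' satisfy (1 − α)/3 ≤ α' ≤ (1 − α)/2. If n₁, n₂ ∈ ℕ are such that the fractional parts {(n₁ + 1)α} and {(n₂ + 1)α} both lie in the interval [1 − α', 1), then the fractional part {(n₁ + n₂ + 1)α} lies in [0, 1 − α). -/
theorem stmt_11 (α' : ℝ)
    (hlo : (1 - alphaFib) / 3 ≤ α') (hhi : α' ≤ (1 - alphaFib) / 2)
    (n₁ n₂ : ℕ)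
    (h₁ : Int.fract (((n₁ : ℝ) + 1) * alphaFib) ∈ Set.Ico (1 - α') (1 : ℝ))
    (h₂ : Int.fract (((n₂ : ℝ) + 1) * alphaFib) ∈ Set.Ico (1 - α') (1 : ℝ)) :
    Int.fract (((n₁ : ℝ) + (n₂ : ℝ) + 1) * alphaFib) ∈
      Set.Ico (0 : ℝ) (1 - alphaFib) := by
  set α := alphaFib with hα
  set a := ((n₁ : ℝ) + 1) * α with ha
  set b := ((n₂ : ℝ) + 1) * α with hb
  obtain ⟨h1l, h1u⟩ := h₁
  obtain ⟨h2l, h2u⟩ := h₂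
  have key : ((n₁ : ℝ) + (n₂ : ℝ) + 1) * α
      = (Int.fract a + Int.fract b - α - 1) + ((⌊a⌋ : ℝ) + ⌊b⌋ + 1) := by
    have fa : (⌊a⌋ : ℝ) = a - Int.fract a := by rw [Int.self_sub_fract]
    have fb : (⌊b⌋ : ℝ) = b - Int.fract b := by rw [Int.self_sub_fract]
    rw [fa, fb, ha, hb]; ring
  have hα0 : 0 < α := by
    have h5 : Real.sqrt 5 < 3 := by
      have := Real.sq_sqrt (by norm_num : (5:ℝ) ≥ 0)
      nlinarith [Real.sqrt_nonneg 5]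
    simp only [hα, alphaFib]; linarith
  have hlo2 : 0 ≤ Int.fract a + Int.fract b - α - 1 := by
    have := Int.fract_nonneg a
    nlinarith
  have hhi2 : Int.fract a + Int.fract b - α - 1 < 1 - α := by linarith
  have hfr : Int.fract (((n₁ : ℝ) + (n₂ : ℝ) + 1) * α)
      = Int.fract a + Int.fract b - α - 1 := by
    rw [key]
    have : ((⌊a⌋ : ℝ) + ⌊b⌋ + 1) = ((⌊a⌋ + ⌊b⌋ + 1 : ℤ) : ℝ) := by push_cast; ring
    rw [this, Int.fract_add_intCast]
    exact Int.fract_eq_self.mpr ⟨hlo2, by linarith⟩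
  rw [hfr]
  exact ⟨hlo2, hhi2⟩
end

section
/- Fix m ≥ 2 and define the m-bonacci numbers by T_k = 2^k for 0 ≤ k ≤ m−1 and T_k = T_{k−1} + T_{k−2} + … + T_{k−m} for k ≥ m. Let t be the m-bonacci word (the fixed point of σ_m: i ↦ 0(i+1) for 0 ≤ i < m−1 and (m−1) ↦ 0), and let g = 0t. Then for each k with 0 ≤ k ≤ m−1, the set g|_k = {n : g_n = k} is an IP-set; specifically, every finite sum of distinct terms of the sequence (T_{mn+k})_{n ∈ ℕ} belongs to g|_k. -/
/-- The m-bonacci substitution: i ↦ 0(i+1) for i < m−1 and (m−1) ↦ 0,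
on the alphabet {0, 1, …, m−1} ⊆ ℕ. -/
def sigmaM (m : ℕ) : ℕ → List ℕ := fun i => if i + 1 < m then [0, i + 1] else [0]

/-! The prefix of `t` of length `N = T_{i_r} + ⋯ + T_{i_1}` (`i_1 < ⋯ < i_r`) is
`σ^{i_r}(0) ⋯ σ^{i_1}(0)`, because `|σ^i(0)| = T_i` and, by `σ(t) = t`, this concatenation is `σ`
of the one with every index lowered by one, followed by `0` when `i_1 = 0`. Since `σ` sends a word
ending in `a` to one ending in `a + 1 mod m`, the last letter `t_{N-1} = g_N` is `i_1 mod m`, which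
is `k` when all `i_j` are of the form `mn + k`. -/

open Finset

def sigmaMWord (m : ℕ) (u : List ℕ) : List ℕ := u.flatMap (sigmaM m)

def mBonacci (m j : ℕ) : ℕ := ((sigmaMWord m)^[j] [0]).length

section Substitution

variable {m : ℕ}

lemma sigmaMWord_append (u v : List ℕ) :
    sigmaMWord m (u ++ v) = sigmaMWord m u ++ sigmaMWord m v :=
  List.flatMap_append

lemma iterate_sigmaMWord_nil (j : ℕ) : (sigmaMWord m)^[j] [] = [] :=
  Function.iterate_fixed rfl j

lemma iterate_sigmaMWord_append (j : ℕ) (u v : List ℕ) :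
    (sigmaMWord m)^[j] (u ++ v) = (sigmaMWord m)^[j] u ++ (sigmaMWord m)^[j] v := by
  induction j generalizing u v with
  | zero => rfl
  | succ j ih => simp only [Function.iterate_succ_apply, sigmaMWord_append, ih]

lemma iterate_succ_sigmaMWord_singleton_of_lt {i : ℕ} (h : i + 1 < m) (j : ℕ) :
    (sigmaMWord m)^[j + 1] [i] = (sigmaMWord m)^[j] [0] ++ (sigmaMWord m)^[j] [i + 1] := by
  rw [Function.iterate_succ_apply, ← iterate_sigmaMWord_append]
  simp [sigmaMWord, sigmaM, h]

lemma iterate_succ_sigmaMWord_singleton_of_not_lt {i : ℕ} (h : ¬ i + 1 < m) (j : ℕ) :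
    (sigmaMWord m)^[j + 1] [i] = (sigmaMWord m)^[j] [0] := by
  rw [Function.iterate_succ_apply]
  simp [sigmaMWord, sigmaM, h]

lemma length_le_length_sigmaMWord (u : List ℕ) : u.length ≤ (sigmaMWord m u).length := by
  induction u with
  | nil => rfl
  | cons a u ih =>
    rw [← List.singleton_append, sigmaMWord_append, List.length_append, List.length_append]
    have : 1 ≤ (sigmaMWord m [a]).length := by
      simp only [sigmaMWord, sigmaM, List.flatMap_singleton]; split <;> simp
    simp only [List.length_singleton]
    omega

lemma length_le_length_iterate_sigmaMWord (j : ℕ) (u : List ℕ) :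
    u.length ≤ ((sigmaMWord m)^[j] u).length := by
  induction j generalizing u with
  | zero => rfl
  | succ j ih =>
    rw [Function.iterate_succ_apply]
    exact (length_le_length_sigmaMWord u).trans (ih _)

lemma getLast?_sigmaMWord {u : List ℕ} {a : ℕ} (hu : u.getLast? = some a) (ha : a < m) :
    (sigmaMWord m u).getLast? = some ((a + 1) % m) := by
  obtain ⟨v, rfl⟩ := List.getLast?_eq_some_iff.1 hu
  rw [sigmaMWord_append, List.getLast?_append]
  by_cases h : a + 1 < m
  · simp [sigmaMWord, sigmaM, h, Nat.mod_eq_of_lt h]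
  · simp [sigmaMWord, sigmaM, show a + 1 = m by omega]

end Substitution

section Lengths

variable {m : ℕ}

lemma length_iterate_sigmaMWord_singleton_of_add_lt {i j : ℕ} (h : i + j < m) :
    ((sigmaMWord m)^[j] [i]).length = 2 ^ j := by
  induction j generalizing i with
  | zero => rfl
  | succ j ih =>
    rw [iterate_succ_sigmaMWord_singleton_of_lt (by omega), List.length_append, ih (by omega),
      ih (by omega), pow_succ]
    omega

lemma length_iterate_sigmaMWord_singleton {i j : ℕ} (hi : i < m) (hj : m - i ≤ j) :
    ((sigmaMWord m)^[j] [i]).length = ∑ s ∈ range (m - i), mBonacci m (j - 1 - s) := by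
  obtain ⟨d, hd⟩ : ∃ d, m - i = d + 1 := ⟨m - i - 1, by omega⟩
  induction d generalizing i j with
  | zero =>
    obtain ⟨j, rfl⟩ : ∃ j', j = j' + 1 := ⟨j - 1, by omega⟩
    rw [iterate_succ_sigmaMWord_singleton_of_not_lt (by omega), hd]
    simp [mBonacci]
  | succ d ih =>
    obtain ⟨j, rfl⟩ : ∃ j', j = j' + 1 := ⟨j - 1, by omega⟩
    rw [iterate_succ_sigmaMWord_singleton_of_lt (by omega), List.length_append,
      ih (i := i + 1) (j := j) (by omega) (by omega) (by omega), hd, sum_range_succ' _ (d + 1),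
      add_comm]
    congr 1
    exact sum_congr (by rw [show m - (i + 1) = d + 1 by omega]) fun s _ => by congr 1; omega

lemma mBonacci_of_lt {j : ℕ} (h : j < m) : mBonacci m j = 2 ^ j :=
  length_iterate_sigmaMWord_singleton_of_add_lt (by omega)

lemma mBonacci_eq_sum {j : ℕ} (hm : 0 < m) (h : m ≤ j) :
    mBonacci m j = ∑ i ∈ range m, mBonacci m (j - 1 - i) :=
  length_iterate_sigmaMWord_singleton hm (by omega)

lemma eq_mBonacci {T : ℕ → ℕ} (hm : 0 < m) (hT1 : ∀ k < m, T k = 2 ^ k)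
    (hT2 : ∀ k, m ≤ k → T k = ∑ i ∈ range m, T (k - 1 - i)) : T = mBonacci m := by
  funext j
  induction j using Nat.strong_induction_on with
  | _ j ih =>
    rcases lt_or_ge j m with h | h
    · rw [hT1 j h, mBonacci_of_lt h]
    · rw [hT2 j h, mBonacci_eq_sum hm h]
      exact sum_congr rfl fun i _ => ih _ (by omega)

lemma mBonacci_strictMono (hm : 2 ≤ m) : StrictMono (mBonacci m) := by
  refine strictMono_nat_of_lt_succ fun j => ?_
  have h1 := length_le_length_iterate_sigmaMWord (m := m) j [1]
  rw [mBonacci, mBonacci, iterate_succ_sigmaMWord_singleton_of_lt (by omega), List.length_append]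
  simp only [List.length_singleton] at h1
  exact Nat.lt_add_of_pos_right h1

end Lengths

/-- `reprWord m p n` is `σ^{i_r}(0) ⋯ σ^{i_1}(0)`, where `i_1 < ⋯ < i_r` are the `i < n` with
`p i`; it is built by a Horner scheme, `σ` shifting every index by one. -/
def reprWord (m : ℕ) (p : ℕ → Prop) [DecidablePred p] : ℕ → List ℕ
  | 0 => []
  | n + 1 => sigmaMWord m (reprWord m (fun i => p (i + 1)) n) ++ if p 0 then [0] else []

section ReprWord

variable {m : ℕ}

lemma length_iterate_sigmaMWord_reprWord (p : ℕ → Prop) [DecidablePred p] (n j : ℕ) :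
    ((sigmaMWord m)^[j] (reprWord m p n)).length =
      ∑ i ∈ range n, if p i then mBonacci m (i + j) else 0 := by
  induction n generalizing p j with
  | zero => simp [reprWord, iterate_sigmaMWord_nil]
  | succ n ih =>
    rw [reprWord, iterate_sigmaMWord_append, List.length_append, ← Function.iterate_succ_apply,
      ih, sum_range_succ']
    congr 1
    · exact sum_congr rfl fun i _ => by rw [Nat.add_right_comm, add_assoc]
    · split_ifs <;> simp [mBonacci, iterate_sigmaMWord_nil]

lemma getLast?_reprWord (hm : 0 < m) {p : ℕ → Prop} [DecidablePred p] {i n : ℕ} (hp : p i)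
    (hmin : ∀ i' < i, ¬ p i') (hin : i < n) :
    (reprWord m p n).getLast? = some (i % m) := by
  induction i generalizing p n with
  | zero =>
    obtain ⟨n, rfl⟩ : ∃ n', n = n' + 1 := ⟨n - 1, by omega⟩
    simp [reprWord, hp]
  | succ i ih =>
    obtain ⟨n, rfl⟩ : ∃ n', n = n' + 1 := ⟨n - 1, by omega⟩
    rw [reprWord, if_neg (hmin 0 (Nat.succ_pos i)), List.append_nil,
      getLast?_sigmaMWord (ih hp (fun i' hi' => hmin (i' + 1) (by omega)) (by omega : i < n))
        (Nat.mod_lt _ hm), Nat.mod_add_mod]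

end ReprWord

section FixedPoint

variable {m : ℕ} {t : ℕ → ℕ}

lemma IsPref.exists_length_eq_succ {u : List ℕ} (hu : IsPref u t) {a : ℕ}
    (ha : u.getLast? = some a) : ∃ N, u.length = N + 1 ∧ t N = a := by
  rw [hu, List.getLast?_map, List.getLast?_range] at ha
  cases hN : u.length with
  | zero => simp [hN] at ha
  | succ N => exact ⟨N, rfl, by simpa [hN] using ha⟩

lemma IsPref.of_append {v w : List ℕ} (h : IsPref (v ++ w) t) : IsPref v t := by
  have := congrArg (List.take v.length) h
  simpa [IsPref, List.take_left, ← List.map_take, List.take_range] using this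

lemma isPref_sigmaMWord (hfix : ∀ n : ℕ, IsPref (((List.range n).map t).flatMap (sigmaM m)) t)
    {u : List ℕ} (hu : IsPref u t) : IsPref (sigmaMWord m u) t := by
  rw [hu]
  exact hfix u.length

lemma isPref_sigmaMWord_append_zero
    (hfix : ∀ n : ℕ, IsPref (((List.range n).map t).flatMap (sigmaM m)) t)
    {u : List ℕ} (hu : IsPref u t) : IsPref (sigmaMWord m u ++ [0]) t := by
  have h := hfix (u.length + 1)
  rw [List.range_succ, List.map_append, ← hu, List.flatMap_append] at h
  obtain ⟨s, hs⟩ : ∃ s, sigmaM m (t u.length) = 0 :: s := by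
    unfold sigmaM; split_ifs
    exacts [⟨_, rfl⟩, ⟨_, rfl⟩]
  rw [List.map_singleton, List.flatMap_singleton, hs, ← List.singleton_append,
    ← List.append_assoc] at h
  exact h.of_append

lemma isPref_reprWord (hfix : ∀ n : ℕ, IsPref (((List.range n).map t).flatMap (sigmaM m)) t)
    (p : ℕ → Prop) [DecidablePred p] (n : ℕ) : IsPref (reprWord m p n) t := by
  induction n generalizing p with
  | zero => rfl
  | succ n ih =>
    rw [reprWord]
    split_ifs
    · exact isPref_sigmaMWord_append_zero hfix (ih _)
    · exact (List.append_nil _).symm ▸ isPref_sigmaMWord hfix (ih _)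

end FixedPoint

lemma exists_sum_mBonacci_eq_succ {m : ℕ} {t : ℕ → ℕ} (hm : 0 < m)
    (hfix : ∀ n : ℕ, IsPref (((List.range n).map t).flatMap (sigmaM m)) t)
    {k : ℕ} (hk : k < m) {A : Finset ℕ} (hA : A.Nonempty) :
    ∃ N, ∑ a ∈ A, mBonacci m (m * a + k) = N + 1 ∧ t N = k := by
  classical
  set B := A.image (fun a => m * a + k)
  obtain ⟨n, hBn⟩ := B.exists_nat_subset_range
  have hlength : (reprWord m (· ∈ B) n).length = ∑ a ∈ A, mBonacci m (m * a + k) := by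
    have := length_iterate_sigmaMWord_reprWord (m := m) (· ∈ B) n 0
    simp only [Function.iterate_zero, id, add_zero] at this
    rw [this, sum_ite_mem, inter_eq_right.2 hBn,
      sum_image fun a _ b _ h => Nat.eq_of_mul_eq_mul_left hm (Nat.add_right_cancel h)]
  have hlast : (reprWord m (· ∈ B) n).getLast? = some k := by
    have hmin : m * A.min' hA + k ∈ B := mem_image_of_mem _ (min'_mem A hA)
    rw [getLast?_reprWord hm hmin _ (mem_range.1 (hBn hmin)), Nat.mul_add_mod, Nat.mod_eq_of_lt hk]
    simp only [B, mem_image, not_exists, not_and]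
    intro i hi a ha hai
    have := Nat.mul_le_mul_left m (min'_le A a ha)
    omega
  obtain ⟨N, hN, htN⟩ := (isPref_reprWord hfix (· ∈ B) n).exists_length_eq_succ hlast
  exact ⟨N, hlength ▸ hN, htN⟩

theorem stmt_14_general (m : ℕ) (hm : 2 ≤ m)
    (t : ℕ → ℕ)
    (hfix : ∀ n : ℕ, IsPref (((List.range n).map t).flatMap (sigmaM m)) t)
    (T : ℕ → ℕ) (hT1 : ∀ k < m, T k = 2 ^ k)
    (hT2 : ∀ k, m ≤ k → T k = ∑ i ∈ Finset.range m, T (k - 1 - i))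
    (g : ℕ → ℕ) (hg : ∀ n, g (n + 1) = t n) :
    ∀ k < m,
      (∀ A : Finset ℕ, A.Nonempty → g (∑ n ∈ A, T (m * n + k)) = k) ∧
        IPSet {n | g n = k} := by
  obtain rfl : T = mBonacci m := eq_mBonacci (by omega) hT1 hT2
  intro k hk
  have hsum (A : Finset ℕ) (hA : A.Nonempty) : g (∑ n ∈ A, mBonacci m (m * n + k)) = k := by
    obtain ⟨N, hN, htN⟩ := exists_sum_mBonacci_eq_succ (by omega) hfix hk hA
    rw [hN, hg, htN]
  refine ⟨hsum, fun n => mBonacci m (m * n + k), ?_, hsum⟩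
  exact (mBonacci_strictMono hm).comp fun a b h => by
    have := Nat.mul_lt_mul_of_pos_left h (by omega : 0 < m)
    omega

theorem stmt_14 (m : ℕ) (hm : 2 ≤ m)
    (t : ℕ → ℕ) (ht0 : t 0 = 0)
    (hfix : ∀ n : ℕ, IsPref (((List.range n).map t).flatMap (sigmaM m)) t)
    (T : ℕ → ℕ) (hT1 : ∀ k < m, T k = 2 ^ k)
    (hT2 : ∀ k, m ≤ k → T k = ∑ i ∈ Finset.range m, T (k - 1 - i))
    (g : ℕ → ℕ) (hg0 : g 0 = 0) (hg : ∀ n, g (n + 1) = t n) :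
    ∀ k < m,
      (∀ A : Finset ℕ, A.Nonempty → g (∑ n ∈ A, T (m * n + k)) = k) ∧
        IPSet {n | g n = k} :=
  stmt_14_general m hm t hfix T hT1 hT2 g hg
end

section
/- Let Ω be the subshift of a Sturmian word, i.e., the shift-orbit closure of an aperiodic word of factor complexity n + 1. If ω, ω', ω'' ∈ Ω satisfy T^{n₀}(ω) = T^{n₀}(ω') = T^{n₀}(ω'') for some n₀ ≥ 1 (T the shift), then at least two of ω, ω', ω'' are equal; i.e., any word in a Sturmian subshift has at most two preimages under T^{n₀} within the subshift. -/
noncomputable def Complexity {A : Type*} (x : ℕ → A) (n : ℕ) : ℕ :=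
  Set.ncard {u : List A | u.length = n ∧ IsFactor u x}

def UltPeriodic {A : Type*} (x : ℕ → A) : Prop :=
  ∃ p : ℕ, 0 < p ∧ ∃ N : ℕ, ∀ n, N ≤ n → x (n + p) = x n

/-!
If `x`, `y`, `z` were pairwise distinct, the last positions at which two of them differ cannot all
coincide (three distinct letters in a binary alphabet), so one of them, `a`, has two different
tails `a[p..)` and `a[m..)` each of which is preceded in the subshift by both letters: all their
prefixes are left special. A Sturmian word has only one left special factor of each length
(otherwise the shifted word has complexity at most `n` at some `n` and is ultimately periodic by
Morse–Hedlund), so the two tails coincide, and the common tail `P` is periodic.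

A periodic left special word is impossible too. Some letter `γ` other than the letter preceding
`P` in `P` itself also precedes `P`. Since `ω` is aperiodic, following an occurrence of `γ P`
until `ω` leaves `P` produces a right special factor `γ P[0, M)` with `M` beyond the period;
right special factors are also unique, and windows of `P` of every length are right special for
the same reason, so `γ P[0, M)` is a window of `P`, which forces `γ` to be that preceding letter.
-/

namespace Sturmian

variable {α : Type*}

def window (w : ℕ → α) (k n : ℕ) : List α :=
  (List.range n).map fun i => w (k + i)

def factors (w : ℕ → α) (n : ℕ) : Set (List α) :=
  {u | u.length = n ∧ IsFactor u w}

section Window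

variable {w w' : ℕ → α} {k k' n : ℕ}

@[simp] lemma length_window : (window w k n).length = n := by
  simp [window]

lemma window_eq_window_iff :
    window w k n = window w' k' n ↔ ∀ i < n, w (k + i) = w' (k' + i) := by
  simp [window, List.ext_getElem_iff]

lemma window_succ_eq_append : window w k (n + 1) = window w k n ++ [w (k + n)] := by
  simp [window, List.range_succ]

lemma window_succ_eq_cons : window w k (n + 1) = w k :: window w (k + 1) n := by
  simp only [window, List.range_succ_eq_map, List.map_cons, List.map_map, add_zero]
  congr 1
  exact List.map_congr_left fun i _ => by simp [Function.comp, Nat.add_assoc, Nat.add_comm 1 i]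

lemma dropLast_window_succ : (window w k (n + 1)).dropLast = window w k n := by
  rw [window_succ_eq_append, List.dropLast_concat]

lemma isFactor_iff {u : List α} : IsFactor u w ↔ ∃ j, u = window w j u.length := Iff.rfl

lemma isFactor_window_iff : IsFactor (window w' k n) w ↔ ∃ j, window w' k n = window w j n := by
  simp only [IsFactor, Occ, Set.mem_ofPred_eq, length_window]
  rfl

lemma window_shift (p : ℕ) : window (fun i => w (p + i)) k n = window w (p + k) n :=
  window_eq_window_iff.2 fun i _ => by simp [Nat.add_assoc]

lemma isFactor_window (w : ℕ → α) (j n : ℕ) : IsFactor (window w j n) w :=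
  isFactor_window_iff.2 ⟨j, rfl⟩

lemma mem_factors_iff {u : List α} : u ∈ factors w n ↔ ∃ j, u = window w j n := by
  constructor
  · rintro ⟨rfl, j, hj⟩
    exact ⟨j, hj⟩
  · rintro ⟨j, rfl⟩
    exact ⟨length_window, isFactor_window w j n⟩

lemma window_mem_factors (w : ℕ → α) (j n : ℕ) : window w j n ∈ factors w n :=
  mem_factors_iff.2 ⟨j, rfl⟩

lemma complexity_eq_ncard (w : ℕ → α) (n : ℕ) : Complexity w n = (factors w n).ncard := rfl

lemma mem_factors_of_isFactor {u : List α} (hu : IsFactor u w) :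
    u ∈ factors w u.length :=
  ⟨rfl, hu⟩

lemma finite_factors [Finite α] (w : ℕ → α) (n : ℕ) : (factors w n).Finite :=
  (List.finite_length_eq α n).subset fun _ hu => hu.1

lemma isFactor_window_of_isPref {x : ℕ → α} (hx : ∀ u, IsPref u x → IsFactor u w)
    (k n : ℕ) : IsFactor (window x k n) w := by
  obtain ⟨j, hj⟩ := isFactor_window_iff.1 (hx (window x 0 (k + n)) (by simp [IsPref, window]))
  refine isFactor_window_iff.2 ⟨j + k, window_eq_window_iff.2 fun i hi => ?_⟩
  have := window_eq_window_iff.1 hj (k + i) (by omega)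
  simpa [Nat.add_assoc] using this

end Window

section Periodicity

variable {w : ℕ → α}

lemma complexity_zero (w : ℕ → α) : Complexity w 0 = 1 := by
  have : {u : List α | u.length = 0 ∧ IsFactor u w} = {[]} := by
    ext u
    simp only [Set.mem_ofPred_eq, Set.mem_singleton_iff, List.length_eq_zero_iff,
      and_iff_left_iff_imp]
    rintro rfl
    exact ⟨0, rfl⟩
  rw [Complexity, this, Set.ncard_singleton]

lemma exists_complexity_succ_le {m : ℕ} (h : Complexity w m ≤ m) :
    ∃ k, Complexity w (k + 1) ≤ Complexity w k := by
  by_contra! hlt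
  have : ∀ k, k + 1 ≤ Complexity w k := by
    intro k
    induction k with
    | zero => rw [complexity_zero]
    | succ k ih => exact (hlt k).trans_le' ih
  exact absurd (this m) (by omega)

lemma eq_of_window_eq_of_complexity_succ_le [Finite α] {k : ℕ}
    (h : Complexity w (k + 1) ≤ Complexity w k) {i i' : ℕ}
    (hii' : window w i k = window w i' k) : w (i + k) = w (i' + k) := by
  have himage : List.dropLast '' factors w (k + 1) = factors w k := by
    ext u
    simp only [Set.mem_image, mem_factors_iff]
    constructor
    · rintro ⟨_, ⟨j, rfl⟩, rfl⟩
      exact ⟨j, dropLast_window_succ⟩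
    · rintro ⟨j, rfl⟩
      exact ⟨_, ⟨j, rfl⟩, dropLast_window_succ⟩
  have hinj : Set.InjOn List.dropLast (factors w (k + 1)) :=
    Set.injOn_of_ncard_image_eq (le_antisymm (Set.ncard_image_le (finite_factors w _))
      (himage ▸ h)) (finite_factors w _)
  have := hinj (window_mem_factors w i (k + 1)) (window_mem_factors w i' (k + 1))
    (by rw [dropLast_window_succ, dropLast_window_succ, hii'])
  simpa using window_eq_window_iff.1 this k k.lt_succ_self

lemma ultPeriodic_of_eq_periodic {P : ℕ → α} {q : ℕ} (hq : 0 < q)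
    (hP : Function.Periodic P q) {j : ℕ} (h : ∀ i, w (j + i) = P i) : UltPeriodic w := by
  refine ⟨q, hq, j, fun n hn => ?_⟩
  obtain ⟨i, rfl⟩ := Nat.exists_eq_add_of_le hn
  rw [Nat.add_assoc, h, h, hP]

lemma ultPeriodic_of_ultPeriodic_succ (h : UltPeriodic fun i => w (i + 1)) : UltPeriodic w := by
  obtain ⟨p, hp, N, hN⟩ := h
  refine ⟨p, hp, N + 1, fun n hn => ?_⟩
  obtain ⟨i, rfl⟩ := Nat.exists_eq_add_of_le hn
  simpa [Nat.add_right_comm] using hN (N + i) (by omega)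

lemma exists_ne_of_window_eq_periodic {P : ℕ → α} {q : ℕ} (hap : ¬ UltPeriodic w)
    (hq : 0 < q) (hP : Function.Periodic P q) {j l : ℕ} (h : window w j l = window P 0 l) :
    ∃ M, l ≤ M ∧ window w j M = window P 0 M ∧ w (j + M) ≠ P M := by
  classical
  have hex : ∃ i, w (j + i) ≠ P i := by
    by_contra! hall
    exact hap (ultPeriodic_of_eq_periodic hq hP hall)
  refine ⟨Nat.find hex, ?_, window_eq_window_iff.2 fun i hi => ?_, Nat.find_spec hex⟩
  · by_contra! hlt
    exact Nat.find_spec hex (by simpa using window_eq_window_iff.1 h _ hlt)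
  · simpa using Nat.find_min hex hi

lemma periodic_of_window_eq {P : ℕ → α} {q : ℕ} (hP : Function.Periodic P q) (hq : 0 < q)
    {s M : ℕ} (hqM : q ≤ M) (h : window P s M = window P 0 M) : Function.Periodic P s := by
  intro i
  have hmod : P (s + i % q) = P (i % q) := by
    simpa using window_eq_window_iff.1 h (i % q) ((Nat.mod_lt i hq).trans_le hqM)
  calc P (i + s) = P (s + i % q + i / q * q) := by
        rw [Nat.add_assoc, Nat.mod_add_div' i q, Nat.add_comm]
    _ = P (s + i % q) := hP.nat_mul _ _
    _ = P i := by rw [hmod, hP.map_mod_nat]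

/-- The Morse–Hedlund theorem. -/
theorem ultPeriodic_of_complexity_le [Finite α] {m : ℕ} (h : Complexity w m ≤ m) :
    UltPeriodic w := by
  obtain ⟨k, hk⟩ := exists_complexity_succ_le h
  obtain ⟨i, i', hne, heq⟩ :=
    Finite.exists_ne_map_eq_of_infinite fun j : ℕ => fun t : Fin k => w (j + t)
  wlog hlt : i < i' generalizing i i'
  · exact this i' i hne.symm heq.symm (by omega)
  have hwindow : ∀ s, window w (i + s) (k + 1) = window w (i' + s) (k + 1) := by
    intro s
    induction s with
    | zero =>
      have h0 : window w i k = window w i' k :=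
        window_eq_window_iff.2 fun t ht => congrFun heq ⟨t, ht⟩
      simp only [add_zero]
      rw [window_succ_eq_append, window_succ_eq_append, h0,
        eq_of_window_eq_of_complexity_succ_le hk h0]
    | succ s ih =>
      rw [window_succ_eq_cons, window_succ_eq_cons, List.cons.injEq] at ih
      have hs : window w (i + (s + 1)) k = window w (i' + (s + 1)) k := by
        rw [← Nat.add_assoc, ← Nat.add_assoc]
        exact window_eq_window_iff.2 fun t ht => by
          simpa using window_eq_window_iff.1 ih.2 t (by omega)
      rw [window_succ_eq_append, window_succ_eq_append, hs,
        eq_of_window_eq_of_complexity_succ_le hk hs]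
  refine ultPeriodic_of_eq_periodic (P := fun s => w (i + s)) (Nat.sub_pos_of_lt hlt)
    (fun s => ?_) (fun s => rfl)
  have := window_eq_window_iff.1 (hwindow s) 0 k.succ_pos
  simp only [add_zero] at this
  change w (i + (s + (i' - i))) = w (i + s)
  rw [this]
  congr 1
  omega

end Periodicity

lemma exists_last_ne {f g : ℕ → α} (hfg : f ≠ g) {n₀ : ℕ}
    (h : ∀ n, f (n + n₀) = g (n + n₀)) :
    ∃ d, f d ≠ g d ∧ ∀ i, d < i → f i = g i := by
  classical
  have hex : ∃ N, ∀ i, N ≤ i → f i = g i :=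
    ⟨n₀, fun i hi => by simpa [Nat.sub_add_cancel hi] using h (i - n₀)⟩
  obtain ⟨d, hd⟩ : ∃ d, Nat.find hex = d + 1 :=
    Nat.exists_eq_succ_of_ne_zero fun h0 => hfg (funext fun i => Nat.find_spec hex i (by omega))
  refine ⟨d, fun hfgd => ?_, fun i hi => Nat.find_spec hex i (by omega)⟩
  refine Nat.find_min hex (show d < Nat.find hex by omega) fun i hi => ?_
  rcases hi.eq_or_lt with rfl | hlt
  · exact hfgd
  · exact Nat.find_spec hex i (by omega)

lemma ncard_add_two_le_of_fibers {β γ : Type*} {f : β → γ} {s : Set β} (hs : s.Finite)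
    {t : Set γ} (ht : t ⊆ f '' s) {a a' b b' : β} (ha : a ∈ s) (ha' : a' ∈ s) (hb : b ∈ s)
    (hb' : b' ∈ s) (haa' : a ≠ a') (hbb' : b ≠ b') (hfa : f a = f a') (hfb : f b = f b')
    (hab : f a ≠ f b) : t.ncard + 2 ≤ s.ncard := by
  have hsub : t ⊆ f '' (s \ {a', b'}) := by
    rintro _ hy
    obtain ⟨z, hz, rfl⟩ := ht hy
    by_cases hza' : z = a'
    · refine ⟨a, ⟨ha, ?_⟩, hza' ▸ hfa⟩
      rintro (h | h)
      exacts [haa' h, hab (by rw [hfb, h])]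
    by_cases hzb' : z = b'
    · refine ⟨b, ⟨hb, ?_⟩, hzb' ▸ hfb⟩
      rintro (h | h)
      exacts [hab (by rw [hfa, h]), hbb' h]
    exact ⟨z, ⟨hz, by rintro (h | h) <;> contradiction⟩, rfl⟩
  have hpair : ({a', b'} : Set β).ncard = 2 :=
    Set.ncard_pair fun h => hab (by rw [hfa, hfb, h])
  calc t.ncard + 2 ≤ (f '' (s \ {a', b'})).ncard + 2 :=
        Nat.add_le_add_right (Set.ncard_le_ncard hsub (hs.sdiff.image f)) 2
    _ ≤ (s \ {a', b'}).ncard + 2 := Nat.add_le_add_right (Set.ncard_image_le hs.sdiff) 2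
    _ = s.ncard := by
        rw [← hpair, Set.ncard_sdiff_add_ncard_of_subset
          (by simp [Set.insert_subset_iff, ha', hb']) hs]

section Special

variable {ω : ℕ → Fin 2} {u v : List (Fin 2)} {P : ℕ → Fin 2} {q : ℕ}

def IsRightSpecial (ω : ℕ → Fin 2) (u : List (Fin 2)) : Prop :=
  ∀ e : Fin 2, IsFactor (u ++ [e]) ω

def IsLeftSpecial (ω : ℕ → Fin 2) (u : List (Fin 2)) : Prop :=
  ∀ e : Fin 2, IsFactor (e :: u) ω

lemma fin_two_eq_or_eq_of_ne {a b : Fin 2} (hab : a ≠ b) (c : Fin 2) : c = a ∨ c = b := by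
  revert a b c
  decide

lemma isRightSpecial_of_ne {e e' : Fin 2} (hee' : e ≠ e') (he : IsFactor (u ++ [e]) ω)
    (he' : IsFactor (u ++ [e']) ω) : IsRightSpecial ω u := fun c => by
  rcases fin_two_eq_or_eq_of_ne hee' c with rfl | rfl <;> assumption

lemma isLeftSpecial_of_ne {e e' : Fin 2} (hee' : e ≠ e') (he : IsFactor (e :: u) ω)
    (he' : IsFactor (e' :: u) ω) : IsLeftSpecial ω u := fun c => by
  rcases fin_two_eq_or_eq_of_ne hee' c with rfl | rfl <;> assumption

/-- With complexity `n + 1`, two right special factors of length `n` would leave only `n`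
factors of length `n` without a second right extension, giving `n + 3` factors of length
`n + 1`. -/
lemma IsRightSpecial.eq (hst : ∀ n, Complexity ω n = n + 1) (hu : IsRightSpecial ω u)
    (hv : IsRightSpecial ω v) (hlen : u.length = v.length) : u = v := by
  by_contra huv
  set n := u.length
  have hsub : factors ω n ⊆ List.dropLast '' factors ω (n + 1) := by
    intro _ hw
    obtain ⟨j, rfl⟩ := mem_factors_iff.1 hw
    exact ⟨_, window_mem_factors ω j (n + 1), dropLast_window_succ⟩
  have hmem : ∀ {w : List (Fin 2)} (e : Fin 2), w.length = n → IsFactor (w ++ [e]) ω →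
      w ++ [e] ∈ factors ω (n + 1) := fun e hw he => by
    simpa [hw] using mem_factors_of_isFactor he
  have := ncard_add_two_le_of_fibers (finite_factors ω (n + 1)) hsub (hmem 0 rfl (hu 0))
    (hmem 1 rfl (hu 1)) (hmem 0 hlen.symm (hv 0)) (hmem 1 hlen.symm (hv 1)) (by simp) (by simp)
    (by simp) (by simp) (by simpa using huv)
  rw [← complexity_eq_ncard, ← complexity_eq_ncard, hst, hst] at this
  omega

lemma IsLeftSpecial.eq (hap : ¬ UltPeriodic ω) (hst : ∀ n, Complexity ω n = n + 1)
    (hu : IsLeftSpecial ω u) (hv : IsLeftSpecial ω v) (hlen : u.length = v.length) : u = v := by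
  by_contra huv
  set n := u.length
  have hsub : factors (fun i => ω (i + 1)) n ⊆ List.tail '' factors ω (n + 1) := by
    intro _ hw
    obtain ⟨j, rfl⟩ := mem_factors_iff.1 hw
    refine ⟨_, window_mem_factors ω j (n + 1), ?_⟩
    rw [window_succ_eq_cons, List.tail_cons]
    exact window_eq_window_iff.2 fun i _ => by simp only [Nat.add_right_comm]
  have hmem : ∀ {w : List (Fin 2)} (e : Fin 2), w.length = n → IsFactor (e :: w) ω →
      e :: w ∈ factors ω (n + 1) := fun e hw he => by
    simpa [hw] using mem_factors_of_isFactor he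
  have := ncard_add_two_le_of_fibers (finite_factors ω (n + 1)) hsub (hmem 0 rfl (hu 0))
    (hmem 1 rfl (hu 1)) (hmem 0 hlen.symm (hv 0)) (hmem 1 hlen.symm (hv 1)) (by simp) (by simp)
    (by simp) (by simp) (by simpa using huv)
  rw [← complexity_eq_ncard, ← complexity_eq_ncard, hst] at this
  exact hap (ultPeriodic_of_ultPeriodic_succ (ultPeriodic_of_complexity_le (m := n) (by omega)))

lemma exists_isRightSpecial_window (hap : ¬ UltPeriodic ω) (hq : 0 < q)
    (hP : Function.Periodic P q) (hfac : ∀ k n, IsFactor (window P k n) ω) (l : ℕ) :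
    ∃ r, IsRightSpecial ω (window P r l) := by
  obtain ⟨j, hj⟩ := isFactor_window_iff.1 (hfac 0 l)
  obtain ⟨M, hlM, hM, hne⟩ := exists_ne_of_window_eq_periodic hap hq hP hj.symm
  obtain ⟨r, rfl⟩ := Nat.exists_eq_add_of_le' hlM
  have hocc : window P r l = window ω (j + r) l := window_eq_window_iff.2 fun i hi => by
    simpa [Nat.add_assoc] using (window_eq_window_iff.1 hM (r + i) (by omega)).symm
  refine ⟨r, isRightSpecial_of_ne hne.symm ?_ ?_⟩
  · rw [← window_succ_eq_append]
    exact hfac r (l + 1)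
  · rw [hocc, ← Nat.add_assoc, ← window_succ_eq_append]
    exact isFactor_window ω _ _

lemma false_of_isLeftSpecial_periodic (hap : ¬ UltPeriodic ω)
    (hst : ∀ n, Complexity ω n = n + 1) (hq : 0 < q) (hP : Function.Periodic P q)
    (hfac : ∀ k n, IsFactor (window P k n) ω) (hL : ∀ n, IsLeftSpecial ω (window P 0 n)) :
    False := by
  obtain ⟨γ, hγ⟩ : ∃ γ, γ ≠ P (q - 1) := ⟨P (q - 1) + 1, by simp⟩
  obtain ⟨j, hj⟩ := isFactor_iff.1 (hL q γ)
  rw [List.length_cons, length_window, window_succ_eq_cons, List.cons.injEq] at hj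
  obtain ⟨M, hqM, hM, hne⟩ := exists_ne_of_window_eq_periodic hap hq hP hj.2.symm
  have hR : IsRightSpecial ω (γ :: window P 0 M) := by
    refine isRightSpecial_of_ne hne.symm ?_ ?_
    · simpa [window_succ_eq_append] using hL (M + 1) γ
    · rw [List.cons_append, hj.1, ← hM, ← window_succ_eq_append, ← window_succ_eq_cons]
      exact isFactor_window ω _ _
  obtain ⟨r, hr⟩ := exists_isRightSpecial_window hap hq hP hfac (M + 1)
  have heq := hr.eq hst hR (by simp)
  rw [window_succ_eq_cons, List.cons.injEq] at heq
  have hper := periodic_of_window_eq hP hq hqM heq.2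
  apply hγ
  rw [← heq.1, ← hper (q - 1), show q - 1 + (r + 1) = r + q by omega, hP]

lemma isLeftSpecial_window_of_last_ne {f g : ℕ → Fin 2}
    (hf : ∀ k n, IsFactor (window f k n) ω) (hg : ∀ k n, IsFactor (window g k n) ω) {d : ℕ}
    (hd : f d ≠ g d) (hfg : ∀ i, d < i → f i = g i) (n : ℕ) :
    IsLeftSpecial ω (window f (d + 1) n) := by
  have htail : window g (d + 1) n = window f (d + 1) n :=
    window_eq_window_iff.2 fun i _ => (hfg _ (by omega)).symm
  refine isLeftSpecial_of_ne hd ?_ ?_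
  · rw [← window_succ_eq_cons]
    exact hf d (n + 1)
  · rw [← htail, ← window_succ_eq_cons]
    exact hg d (n + 1)

lemma false_of_isLeftSpecial_tails (hap : ¬ UltPeriodic ω) (hst : ∀ n, Complexity ω n = n + 1)
    {a : ℕ → Fin 2} (ha : ∀ k n, IsFactor (window a k n) ω) {p m : ℕ} (hpm : p ≠ m)
    (hp : ∀ n, IsLeftSpecial ω (window a p n)) (hm : ∀ n, IsLeftSpecial ω (window a m n)) :
    False := by
  wlog hlt : p < m generalizing p m
  · exact this hpm.symm hm hp (by omega)
  by_cases htails : ∀ i, a (p + i) = a (m + i)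
  · have hP : Function.Periodic (fun i => a (p + i)) (m - p) := fun i => by
      change a (p + (i + (m - p))) = a (p + i)
      rw [htails i]
      congr 1
      omega
    refine false_of_isLeftSpecial_periodic hap hst (Nat.sub_pos_of_lt hlt) hP (fun k n => ?_)
      (fun n => ?_)
    · rw [window_shift]
      exact ha _ _
    · rw [window_shift]
      exact hp n
  · push Not at htails
    obtain ⟨i, hi⟩ := htails
    exact hi (window_eq_window_iff.1 ((hp (i + 1)).eq hap hst (hm (i + 1)) (by simp)) i
      i.lt_succ_self)

end Special

end Sturmian

open Sturmian

theorem stmt_15_general (ω : ℕ → Fin 2)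
    (hap : ¬ UltPeriodic ω) (hst : ∀ n, Complexity ω n = n + 1)
    (x y z : ℕ → Fin 2)
    (hx : ∀ u : List (Fin 2), IsPref u x → IsFactor u ω)
    (hy : ∀ u : List (Fin 2), IsPref u y → IsFactor u ω)
    (hz : ∀ u : List (Fin 2), IsPref u z → IsFactor u ω)
    (n₀ : ℕ)
    (hxy : ∀ n, x (n + n₀) = y (n + n₀))
    (hxz : ∀ n, x (n + n₀) = z (n + n₀)) :
    x = y ∨ x = z ∨ y = z := by
  have hxf := isFactor_window_of_isPref hx
  have hyf := isFactor_window_of_isPref hy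
  have hzf := isFactor_window_of_isPref hz
  by_contra! hne
  obtain ⟨hxy', hxz', hyz'⟩ := hne
  obtain ⟨d₁, hd₁, hxy₁⟩ := exists_last_ne hxy' hxy
  obtain ⟨d₂, hd₂, hxz₂⟩ := exists_last_ne hxz' hxz
  obtain ⟨d₃, hd₃, hyz₃⟩ := exists_last_ne hyz' fun n => (hxy n).symm.trans (hxz n)
  by_cases h₁₂ : d₁ = d₂
  · by_cases h₁₃ : d₁ = d₃
    · subst h₁₂ h₁₃
      exact (fin_two_eq_or_eq_of_ne hd₁ (z d₁)).elim (fun h => hd₂ h.symm)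
        fun h => hd₃ h.symm
    · exact false_of_isLeftSpecial_tails hap hst hyf (by omega)
        (isLeftSpecial_window_of_last_ne hyf hxf hd₁.symm fun i hi => (hxy₁ i hi).symm)
        (isLeftSpecial_window_of_last_ne hyf hzf hd₃ hyz₃)
  · exact false_of_isLeftSpecial_tails hap hst hxf (by omega)
      (isLeftSpecial_window_of_last_ne hxf hyf hd₁ hxy₁)
      (isLeftSpecial_window_of_last_ne hxf hzf hd₂ hxz₂)

theorem stmt_15 (ω : ℕ → Fin 2)
    (hap : ¬ UltPeriodic ω) (hst : ∀ n, Complexity ω n = n + 1)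
    (x y z : ℕ → Fin 2)
    (hx : ∀ u : List (Fin 2), IsPref u x → IsFactor u ω)
    (hy : ∀ u : List (Fin 2), IsPref u y → IsFactor u ω)
    (hz : ∀ u : List (Fin 2), IsPref u z → IsFactor u ω)
    (n₀ : ℕ) (hn₀ : 1 ≤ n₀)
    (hxy : ∀ n, x (n + n₀) = y (n + n₀))
    (hxz : ∀ n, x (n + n₀) = z (n + n₀)) :
    x = y ∨ x = z ∨ y = z :=
  stmt_15_general ω hap hst x y z hx hy hz n₀ hxy hxz
end

section
/- Let Δ be a right-infinite word over an alphabet in which every letter appears infinitely often, and let ω = ψ(Δ) be its iterated palindromic closure. Then for every prefix u of ω and every letter a of the alphabet, the word au is a factor of ω. -/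
/-- `c` is the right palindromic closure of `w`: the shortest palindrome
having `w` as a prefix. -/
def IsPalClosure {A : Type*} (w c : List A) : Prop :=
  c.reverse = c ∧ w <+: c ∧
    ∀ q : List A, q.reverse = q → w <+: q → c.length ≤ q.length

lemma pref_get {A : Type*} {ω : ℕ → A} {v : List A} (hv : IsPref v ω)
    {j : ℕ} (hj : j < v.length) : v[j]? = some (ω j) := by
  conv_lhs => rw [hv]
  rw [List.getElem?_map, List.getElem?_range hj]
  rfl

lemma infix_factor {A : Type*} {ω : ℕ → A} {v s : List A}
    (hv : IsPref v ω) (hs : s <:+: v) : IsFactor s ω := by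
  obtain ⟨t, r, hvr⟩ := hs
  refine ⟨t.length, ?_⟩
  show s = _
  apply List.ext_getElem?
  intro i
  rcases lt_or_ge i s.length with hi | hi
  · have hlt : t.length + i < v.length := by
      rw [← hvr]; simp; omega
    have h1 : v[t.length + i]? = s[i]? := by
      rw [← hvr]
      rw [List.append_assoc, List.getElem?_append_right (by omega)]
      simp [List.getElem?_append_left hi]
    rw [pref_get hv hlt] at h1
    rw [← h1]
    simp [List.getElem?_map, List.getElem?_range hi]
  · rw [List.getElem?_eq_none hi, List.getElem?_eq_none (by simpa using hi)]

lemma pref_pref {A : Type*} {ω : ℕ → A} {u v : List A}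
    (hu : IsPref u ω) (hv : IsPref v ω) (h : u.length ≤ v.length) :
    u <+: v := by
  have huv : u = v.take u.length := by
    conv_lhs => rw [hu]
    rw [hv, ← List.map_take, List.take_range, min_eq_left h]
  rw [huv]; exact List.take_prefix _ _

theorem stmt_18 {A : Type*} (ψ : List A → List A) (hψ0 : ψ [] = [])
    (hψ : ∀ (w : List A) (a : A), IsPalClosure (ψ w ++ [a]) (ψ (w ++ [a])))
    (Δ : ℕ → A) (hinf : ∀ a : A, ∀ N : ℕ, ∃ n, N ≤ n ∧ Δ n = a)
    (ω : ℕ → A)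
    (hω : ∀ n : ℕ, IsPref (ψ ((List.range n).map Δ)) ω) :
    ∀ u : List A, IsPref u ω → ∀ a : A, IsFactor (a :: u) ω := by
  set P : ℕ → List A := fun n => ψ ((List.range n).map Δ) with hP
  have hsucc : ∀ n, (List.range (n + 1)).map Δ = (List.range n).map Δ ++ [Δ n] := by
    intro n; rw [List.range_succ, List.map_append]; rfl
  have pal : ∀ n, (P n).reverse = P n := by
    intro n
    cases n with
    | zero => simp [hP, hψ0]
    | succ m => simp only [hP, hsucc m]; exact (hψ _ (Δ m)).1
  have step : ∀ n, P n ++ [Δ n] <+: P (n + 1) := by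
    intro n
    simp only [hP, hsucc n]
    exact (hψ _ (Δ n)).2.1
  have len_ge : ∀ n, n ≤ (P n).length := by
    intro n
    induction n with
    | zero => simp
    | succ m ih =>
      have := (step m).length_le
      simp only [List.length_append, List.length_singleton] at this
      omega
  intro u hu a
  obtain ⟨m, hm, hma⟩ := hinf a u.length
  have hupref : u <+: P m := pref_pref hu (hω m) (le_trans hm (len_ge m))
  have hsuf : u.reverse <:+ P m := by
    rw [← pal m]
    exact List.reverse_suffix.mpr hupref
  have h2 : u.reverse ++ [a] <:+ P m ++ [Δ m] := by
    obtain ⟨t, ht⟩ := hsuf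
    exact ⟨t, by rw [← List.append_assoc, ht, hma]⟩
  have h3 : u.reverse ++ [a] <:+: P (m + 1) := h2.isInfix.trans (step m).isInfix
  have h4 : a :: u <:+: P (m + 1) := by
    have := List.reverse_infix.mpr h3
    rwa [pal (m + 1), List.reverse_append, List.reverse_reverse,
      List.reverse_singleton, List.singleton_append] at this
  exact infix_factor (hω (m + 1)) h4
end

section
/- Let Δ be a right-infinite word over a finite or countable alphabet and ω = ψ(Δ) its iterated palindromic closure. Then ω is uniformly recurrent: for every factor u of ω, the set of occurrences of u in ω is syndetic (has bounded gaps). -/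
section Helpers

variable {A : Type*}

lemma mem_occ_iff {x : ℕ → A} {u : List A} {n : ℕ} :
    n ∈ Occ x u ↔ ∀ i, (hi : i < u.length) → u[i] = x (n + i) := by
  constructor
  · intro h i hi
    have h' : u = (List.range u.length).map fun i => x (n + i) := h
    rw [List.getElem_of_eq h' hi]
    simp
  · intro h
    show u = _
    apply List.ext_getElem (by simp)
    intro i h1 h2
    simpa using h i h1

lemma occ_zero_of_pref {x : ℕ → A} {u : List A} (h : IsPref u x) : 0 ∈ Occ x u := by
  rw [mem_occ_iff]
  intro i hi
  have h' : u = (List.range u.length).map x := h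
  rw [List.getElem_of_eq h' hi]
  simp

lemma occ_of_prefix {x : ℕ → A} {u v : List A} (h : u <+: v) {n : ℕ}
    (hv : n ∈ Occ x v) : n ∈ Occ x u := by
  rw [mem_occ_iff] at *
  intro i hi
  obtain ⟨t, ht⟩ := h
  subst ht
  have h2 := hv i (by simp; omega)
  rwa [List.getElem_append_left hi] at h2

lemma occ_of_suffix {x : ℕ → A} {u v : List A} (h : u <:+ v) {n : ℕ}
    (hv : n ∈ Occ x v) : n + (v.length - u.length) ∈ Occ x u := by
  rw [mem_occ_iff] at *
  intro i hi
  obtain ⟨t, ht⟩ := h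
  subst ht
  have h1 : t.length + i < (t ++ u).length := by simp; omega
  have h2 := hv (t.length + i) h1
  rw [List.getElem_append_right (by omega)] at h2
  simp only [Nat.add_sub_cancel_left] at h2
  have e : (t ++ u).length - u.length = t.length := by simp
  rw [e, h2]
  congr 1
  omega

lemma occ_transfer {x : ℕ → A} {u v : List A} {a b c : ℕ}
    (ha : a ∈ Occ x v) (hb : b ∈ Occ x v) (hc : c ∈ Occ x u)
    (hac : a ≤ c) (hlen : c + u.length ≤ a + v.length) :
    b + (c - a) ∈ Occ x u := by
  rw [mem_occ_iff] at *
  intro i hi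
  have hj : c - a + i < v.length := by omega
  have h1 := ha (c - a + i) hj
  have h2 := hb (c - a + i) hj
  have h3 := hc i hi
  rw [h3]
  have e1 : a + (c - a + i) = c + i := by omega
  rw [e1] at h1
  rw [← h1, h2]
  congr 1
  omega


end Helpers

theorem stmt_19 {A : Type*} (ψ : List A → List A) (hψ0 : ψ [] = [])
    (hψ : ∀ (w : List A) (a : A), IsPalClosure (ψ w ++ [a]) (ψ (w ++ [a])))
    (Δ : ℕ → A) (ω : ℕ → A)
    (hω : ∀ n : ℕ, IsPref (ψ ((List.range n).map Δ)) ω) :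
    ∀ u : List A, IsFactor u ω →
      ∃ B : ℕ, ∀ n : ℕ, ∃ m, n ≤ m ∧ m ≤ n + B ∧ m ∈ Occ ω u := by
  set W : ℕ → List A := fun n => ψ ((List.range n).map Δ) with hW
  have hstep : ∀ n, IsPalClosure (W n ++ [Δ n]) (W (n+1)) := by
    intro n
    have h := hψ ((List.range n).map Δ) (Δ n)
    have e : (List.range n).map Δ ++ [Δ n] = (List.range (n+1)).map Δ := by
      rw [List.range_succ, List.map_append]; rfl
    rw [e] at h
    exact h
  have pal : ∀ n, (W n).reverse = W n := by
    intro n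
    cases n with
    | zero => simp [hW, hψ0]
    | succ n => exact (hstep n).1
  have hpre : ∀ n, W n ++ [Δ n] <+: W (n+1) := fun n => (hstep n).2.1
  have hlen1 : ∀ n, (W n).length + 1 ≤ (W (n+1)).length := by
    intro n
    have := (hpre n).length_le
    simpa using this
  have hlen2 : ∀ n, (W (n+1)).length ≤ 2 * (W n).length + 1 := by
    intro n
    have h := (hstep n).2.2 (W n ++ [Δ n] ++ (W n).reverse)
      (by simp [List.reverse_append, pal n]) (List.prefix_append _ _)
    simp at h
    omega
  have hmono : ∀ n, W n <+: W (n+1) := fun n =>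
    ((List.prefix_append (W n) [Δ n]).trans (hpre n))
  have hprefle : ∀ k m, k ≤ m → W k <+: W m := by
    intro k m hkm
    induction m, hkm using Nat.le_induction with
    | base => exact List.prefix_refl _
    | succ m hm ih => exact ih.trans (hmono m)
  have hsuf : ∀ n, W n <:+ W (n+1) := by
    intro n
    have h : (W n).reverse <+: (W (n+1)).reverse := by rw [pal n, pal (n+1)]; exact hmono n
    exact List.reverse_prefix.mp h
  have hsufle : ∀ k m, k ≤ m → W k <:+ W m := by
    intro k m hkm
    induction m, hkm using Nat.le_induction with
    | base => exact List.suffix_refl _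
    | succ m hm ih => exact ih.trans (hsuf m)
  have hlenn : ∀ n, n ≤ (W n).length := by
    intro n
    induction n with
    | zero => omega
    | succ n ih => have := hlen1 n; omega
  have hocc0 : ∀ n, 0 ∈ Occ ω (W n) := fun n => occ_zero_of_pref (hω n)
  have hoccD : ∀ m, ((W (m+1)).length - (W m).length) ∈ Occ ω (W m) := by
    intro m
    have := occ_of_suffix (hsuf m) (hocc0 (m+1))
    simpa using this
  intro u hu
  obtain ⟨n0, hn0⟩ := hu
  set k := n0 + u.length with hk
  have hkL : n0 + u.length ≤ (W k).length := hlenn k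
  have Q : ∀ m, k ≤ m → ∀ p, p + (W k).length ≤ (W m).length →
      ∃ q, p ≤ q ∧ q ≤ p + (W k).length + 1 ∧ q + (W k).length ≤ (W m).length ∧
        q ∈ Occ ω (W k) := by
    intro m hm
    induction m, hm using Nat.le_induction with
    | base =>
      intro p hp
      exact ⟨0, by omega, by omega, by omega, hocc0 k⟩
    | succ m hm ih =>
      intro p hp
      have hD1 := hlen1 m
      have hD2 := hlen2 m
      have hL : (W k).length ≤ (W m).length := (hprefle k m hm).length_le
      by_cases h1 : p + (W k).length ≤ (W m).length
      · obtain ⟨q, hq1, hq2, hq3, hq4⟩ := ih p h1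
        exact ⟨q, hq1, hq2, by omega, hq4⟩
      · by_cases h2 : p ≤ (W (m+1)).length - (W m).length
        · refine ⟨(W (m+1)).length - (W m).length, h2, by omega, by omega, ?_⟩
          exact occ_of_prefix (hprefle k m hm) (hoccD m)
        · have hp' : (p - ((W (m+1)).length - (W m).length)) + (W k).length ≤ (W m).length := by
            omega
          obtain ⟨q', hq1, hq2, hq3, hq4⟩ := ih _ hp'
          refine ⟨((W (m+1)).length - (W m).length) + q', by omega, by omega, by omega, ?_⟩
          have := occ_transfer (hocc0 m) (hoccD m) hq4 (Nat.zero_le _) (by omega)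
          simpa using this
  refine ⟨(W k).length + 1 + n0, ?_⟩
  intro n
  have hm : k ≤ k + n + (W k).length := by omega
  have hlenm : n + (W k).length ≤ (W (k + n + (W k).length)).length := by
    have := hlenn (k + n + (W k).length); omega
  obtain ⟨q, hq1, hq2, _, hq4⟩ := Q (k + n + (W k).length) hm n hlenm
  have huocc : q + n0 ∈ Occ ω u := by
    have := occ_transfer (hocc0 k) hq4 hn0 (Nat.zero_le _) (by omega)
    simpa using this
  exact ⟨q + n0, by omega, by omega, huocc⟩
end
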